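/- Let ȳ be as in Example 2.5 (the piecewise sextic function on [-1,1] defined by ȳ(x) = -(1/2)(x+1) + (1/2)(x+1)³ + (1/12)(1-x²)³ for x ≤ 0 and the reflected formula for x ≥ 0). Then for every z ∈ H²(-1,1) with z(-1)=z(1)=0, ∫_{-1}^{1} ȳ'' z'' dx = 6 z'(0) + ∫_{-1}^{1} 6(1 - 5x²) z dx. -/

import Mathlib

/-!
On `(0, 1]` the function `ȳ''` is the polynomial `p x = 3(x-1) - (1-6x²+5x⁴)/2`, and on `[-1, 0]`
it is `p + 6`, so `ȳ'' = p + 6·𝟙_{x ≤ 0}`. Integrating by parts twice against `p`, whose second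
derivative is `6(1-5x²)`, leaves the boundary term `-p(-1) z'(-1) = 6 z'(-1)` (the terms with `z(±1)`
vanish and `p(1) = 0`). The jump contributes `6 ∫_{-1}^0 z'' = 6 z'(0) - 6 z'(-1)`.
-/

open MeasureTheory Set

/-- The second derivative of the exact solution `ȳ` of Example 2.5. -/
noncomputable def ybarD'' (x : ℝ) : ℝ :=
  if x ≤ 0 then 3*(x+1) - (1/2)*(1 - 6*x^2 + 5*x^4)
  else 3*(x-1) - (1/2)*(1 - 6*x^2 + 5*x^4)

open scoped Interval

namespace intervalIntegral

variable {A : Type*} [NormedRing A] [NormedAlgebra ℝ A] [CompleteSpace A] {a b : ℝ}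

theorem integral_mul_deriv_deriv_eq {f f' f'' g g' g'' : ℝ → A}
    (hf : ∀ x ∈ [[a, b]], HasDerivWithinAt f (f' x) [[a, b]] x)
    (hf' : ∀ x ∈ [[a, b]], HasDerivWithinAt f' (f'' x) [[a, b]] x)
    (hg : ∀ x ∈ [[a, b]], HasDerivWithinAt g (g' x) [[a, b]] x)
    (hg' : ∀ x ∈ [[a, b]], HasDerivWithinAt g' (g'' x) [[a, b]] x)
    (hf'' : IntervalIntegrable f'' volume a b) (hg'' : IntervalIntegrable g'' volume a b) :
    ∫ x in a..b, f x * g'' x =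
      f b * g' b - f a * g' a - (f' b * g b - f' a * g a) + ∫ x in a..b, f'' x * g x := by
  have hf'c : ContinuousOn f' [[a, b]] := fun x hx => (hf' x hx).continuousWithinAt
  have hg'c : ContinuousOn g' [[a, b]] := fun x hx => (hg' x hx).continuousWithinAt
  rw [integral_mul_deriv_eq_deriv_mul_of_hasDerivWithinAt hf hg' hf'c.intervalIntegrable hg'',
    integral_mul_deriv_eq_deriv_mul_of_hasDerivWithinAt hf' hg hf'' hg'c.intervalIntegrable]
  abel

variable {E : Type*} [NormedAddCommGroup E] [NormedSpace ℝ E] [CompleteSpace E]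

theorem integral_eq_sub_of_hasDerivWithinAt {f f' : ℝ → E} {s : Set ℝ} (hs : [[a, b]] ⊆ s)
    (hf : ∀ x ∈ [[a, b]], HasDerivWithinAt f (f' x) s x) (hf' : IntervalIntegrable f' volume a b) :
    ∫ x in a..b, f' x = f b - f a :=
  integral_eq_sub_of_hasDeriv_right (fun x hx => (hf x hx).continuousWithinAt.mono hs)
    (fun x hx => ((hf x (mem_Icc_of_Ioo hx)).hasDerivAt
      (Filter.mem_of_superset (Icc_mem_nhds hx.1 hx.2) hs)).hasDerivWithinAt) hf'

end intervalIntegral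

theorem IntervalIntegrable.indicator {E : Type*} [NormedAddCommGroup E] {f : ℝ → E}
    {μ : Measure ℝ} {a b : ℝ} (hf : IntervalIntegrable f μ a b) {s : Set ℝ} (hs : MeasurableSet s) :
    IntervalIntegrable (s.indicator f) μ a b :=
  ⟨hf.1.indicator hs, hf.2.indicator hs⟩

noncomputable def ybarD''Right (x : ℝ) : ℝ := 3*(x-1) - (1/2)*(1 - 6*x^2 + 5*x^4)

noncomputable def ybarD'''Right (x : ℝ) : ℝ := 3 + 6*x - 10*x^3

theorem hasDerivAt_ybarD''Right (x : ℝ) : HasDerivAt ybarD''Right (ybarD'''Right x) x := by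
  have h := (((hasDerivAt_id x).sub_const 1).const_mul 3).sub
    ((((hasDerivAt_const x (1:ℝ)).sub ((hasDerivAt_pow 2 x).const_mul 6)).add
      ((hasDerivAt_pow 4 x).const_mul 5)).const_mul (1/2))
  refine h.congr_deriv ?_
  simp only [ybarD'''Right]
  push_cast
  ring

theorem hasDerivAt_ybarD'''Right (x : ℝ) : HasDerivAt ybarD'''Right (6*(1 - 5*x^2)) x := by
  have h := (((hasDerivAt_id x).const_mul 6).const_add 3).sub ((hasDerivAt_pow 3 x).const_mul 10)
  refine h.congr_deriv ?_
  push_cast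
  ring

theorem ybarD''_eq_add_indicator (x : ℝ) :
    ybarD'' x = ybarD''Right x + {x : ℝ | x ≤ 0}.indicator (fun _ => 6) x := by
  simp only [ybarD'', ybarD''Right, indicator, mem_ofPred_eq]
  split_ifs <;> ring

theorem example_dirichlet_multiplier_identity_general
    (z z1 z2 : ℝ → ℝ)
    (hz1 : ∀ x ∈ Set.Icc (-1:ℝ) 1, HasDerivWithinAt z (z1 x) (Set.Icc (-1:ℝ) 1) x)
    (hz2 : ∀ x ∈ Set.Icc (-1:ℝ) 1, HasDerivWithinAt z1 (z2 x) (Set.Icc (-1:ℝ) 1) x)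
    (hz2int : IntervalIntegrable z2 MeasureTheory.volume (-1:ℝ) 1)
    (hbc1 : z (-1) = 0) (hbc2 : z 1 = 0) :
    ∫ x in (-1:ℝ)..1, ybarD'' x * z2 x =
      6 * z1 0 + ∫ x in (-1:ℝ)..1, 6*(1 - 5*x^2) * z x := by
  have hI : [[(-1:ℝ), 1]] = Icc (-1) 1 := uIcc_of_le (by norm_num)
  have hpoly : ∫ x in (-1:ℝ)..1, ybarD''Right x * z2 x =
      6 * z1 (-1) + ∫ x in (-1:ℝ)..1, 6*(1 - 5*x^2) * z x := by
    rw [intervalIntegral.integral_mul_deriv_deriv_eq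
      (fun x _ => (hasDerivAt_ybarD''Right x).hasDerivWithinAt)
      (fun x _ => (hasDerivAt_ybarD'''Right x).hasDerivWithinAt)
      (hI ▸ hz1) (hI ▸ hz2) (Continuous.intervalIntegrable (by fun_prop) _ _) hz2int]
    norm_num [ybarD''Right, hbc1, hbc2]
  have hsub : [[(-1:ℝ), 0]] ⊆ Icc (-1) 1 := by
    rw [uIcc_of_le (by norm_num)]
    exact Icc_subset_Icc le_rfl (by norm_num)
  have hjump : ∫ x in (-1:ℝ)..1, {x : ℝ | x ≤ 0}.indicator (fun x => 6 * z2 x) x =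
      6 * (z1 0 - z1 (-1)) := by
    rw [intervalIntegral.integral_indicator (by norm_num), intervalIntegral.integral_const_mul,
      intervalIntegral.integral_eq_sub_of_hasDerivWithinAt hsub (fun x hx => hz2 x (hsub hx))
        (hz2int.mono_set (hI ▸ hsub))]
  calc ∫ x in (-1:ℝ)..1, ybarD'' x * z2 x
      = ∫ x in (-1:ℝ)..1, ybarD''Right x * z2 x +
          {x : ℝ | x ≤ 0}.indicator (fun x => 6 * z2 x) x := by
        simp only [ybarD''_eq_add_indicator, add_mul, indicator_mul_left]
    _ = 6 * z1 0 + ∫ x in (-1:ℝ)..1, 6*(1 - 5*x^2) * z x := by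
        rw [intervalIntegral.integral_add (hz2int.continuousOn_mul
          fun x _ => (hasDerivAt_ybarD''Right x).continuousAt.continuousWithinAt)
          ((hz2int.const_mul 6).indicator (s := {x | x ≤ 0}) measurableSet_Iic),
          hpoly, hjump]
        ring

/-- Identity (2.21): for every `z ∈ H²(-1,1)` with `z(-1) = z(1) = 0`,
`∫ ȳ'' z'' = 6 z'(0) + ∫ 6(1-5x²) z`. -/
theorem example_dirichlet_multiplier_identity
    (z z1 z2 : ℝ → ℝ)
    (hz : ContinuousOn z (Set.Icc (-1:ℝ) 1))
    (hz1 : ∀ x ∈ Set.Icc (-1:ℝ) 1, HasDerivWithinAt z (z1 x) (Set.Icc (-1:ℝ) 1) x)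
    (hz1c : ContinuousOn z1 (Set.Icc (-1:ℝ) 1))
    (hz2 : ∀ x ∈ Set.Icc (-1:ℝ) 1, HasDerivWithinAt z1 (z2 x) (Set.Icc (-1:ℝ) 1) x)
    (hz2int : IntervalIntegrable z2 MeasureTheory.volume (-1:ℝ) 1)
    (hbc1 : z (-1) = 0) (hbc2 : z 1 = 0) :
    ∫ x in (-1:ℝ)..1, ybarD'' x * z2 x =
      6 * z1 0 + ∫ x in (-1:ℝ)..1, 6*(1 - 5*x^2) * z x :=
  example_dirichlet_multiplier_identity_general z z1 z2 hz1 hz2 hz2int hbc1 hbc2
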